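/- Let A be a K-algebra satisfying additionally J₂¬x = ¬J₂x for all x. Then the map φ(a) := (J₂a, a ∧ ¬a) preserves the operations ¬, ∨ and J₂ into the product: J₂(¬a) = ¬(J₂a), (¬a) ∧ (¬¬a) = a ∧ ¬a, J₂(a∨b) = J₂a ∨ J₂b considered in O(A), (a∨b) ∧ ¬(a∨b) = (a∧¬a) ∨ (b∧¬b), J₂(J₂a) = J₂a, and J₂a ∧ ¬J₂a = 0. -/

import Mathlib

/-- The operations of a Bochvar-type algebra ⟨A, ∨, ¬, J₂, 0, 1⟩. -/
class KOps (α : Type*) where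
  sup : α → α → α
  neg : α → α
  J : α → α
  zero : α
  one : α

namespace KOps

variable {α : Type*} [KOps α]

/-- The meet, defined à la De Morgan: x ∧ y := ¬(¬x ∨ ¬y). -/
def meet (x y : α) : α := neg (sup (neg x) (neg y))

end KOps

open KOps

/-- A K-algebra: an algebra satisfying the identities K1–K12 axiomatising
the variety generated by Bochvar algebras. (K5 holds by definition of `meet`.) -/
class KAlgebra (α : Type*) [KOps α] : Prop where
  K1 : ∀ x : α, sup x x = x
  K2 : ∀ x y : α, sup x y = sup y x
  K3 : ∀ x y z : α, sup (sup x y) z = sup x (sup y z)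
  K4 : ∀ x : α, neg (neg x) = x
  K5 : ∀ x y : α, meet x y = neg (sup (neg x) (neg y))
  K6 : ∀ x y : α, meet x (sup (neg x) y) = meet x y
  K7 : ∀ x : α, sup zero x = x
  K8 : (one : α) = neg zero
  K9 : ∀ x : α, sup (J x) (neg (J x)) = one
  K10 : ∀ x y : α, sup x (J y) = sup x (J (sup x y))
  K11 : ∀ x : α, meet x (J x) = x
  K12 : ∀ x : α, J (meet x (neg x)) = zero

/-!
The J₂-coordinate: with `J₂¬x = ¬J₂x`, K11 becomes `x ∨ J₂x = x`, and K9, K10, K12 give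
`¬J₂x ∨ J₂(x ∨ z) = 1`. For the order `x ≤ y :⇔ x ∨ y = y` this says
`J₂x ≤ J₂(x ∨ z)`, so `J₂` is idempotent and monotone, and K10 upgrades monotonicity
to additivity.

The `x ∧ ¬x`-coordinate: call `s` nil when `s ∧ ¬s = s`. Every `x ∧ ¬x` is nil, nil
elements form an ideal for `∧`, a nil element cannot distinguish `x` from `¬x`
(`x ∧ s = ¬x ∧ s`), and on nil elements `∨` and `∧` coincide. Since
`(a ∨ b) ∧ ¬(a ∨ b) = ¬a ∧ (b ∧ ¬b)` by K6, both sides of the identity reduce to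
`(a ∧ ¬a) ∧ (b ∧ ¬b)`.
-/

namespace KAlgebra

variable {α : Type*} [KOps α] [KAlgebra α]

theorem sup_zero (x : α) : sup x zero = x := by
  rw [K2, K7]

theorem neg_one : (neg one : α) = zero := by
  rw [K8, K4]

theorem neg_meet (x y : α) : neg (meet x y) = sup (neg x) (neg y) := by
  rw [K5, K4]

theorem neg_sup (x y : α) : neg (sup x y) = meet (neg x) (neg y) := by
  rw [K5, K4, K4]

theorem meet_comm (x y : α) : meet x y = meet y x := by
  rw [K5, K5, K2]

theorem meet_assoc (x y z : α) : meet (meet x y) z = meet x (meet y z) := by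
  simp only [K5, K4, K3]

theorem meet_idem (x : α) : meet x x = x := by
  rw [K5, K1, K4]

theorem one_meet (x : α) : meet one x = x := by
  rw [K5, neg_one, K7, K4]

theorem neg_meet_sup_self_left (x y : α) : meet (neg x) (sup x y) = meet (neg x) y := by
  simpa only [K4] using K6 (neg x) y

theorem sup_neg_meet_left (x y : α) : sup x (meet (neg x) y) = sup x y := by
  have h : neg (sup x (meet (neg x) y)) = neg (sup x y) := by
    rw [neg_sup, neg_meet, K4, neg_meet_sup_self_left, neg_sup]
  simpa only [K4] using congrArg neg h

theorem sup_eq_left_of_neg_sup_eq_one {z w : α} (h : sup (neg z) w = one) : sup w z = w := by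
  have hmeet : meet (neg w) z = zero := by
    rw [K5, K4, K2, h, neg_one]
  rw [← sup_neg_meet_left, hmeet, sup_zero]

theorem sup_J_self (hJ : ∀ x : α, J (neg x) = neg (J x)) (x : α) : sup x (J x) = x := by
  simpa only [neg_meet, hJ, K4] using congrArg neg (K11 (neg x))

theorem J_one : J (one : α) = one := by
  simpa only [one_meet] using K11 (one : α)

theorem neg_J_sup_one (x : α) : sup (neg (J x)) one = one := by
  rw [← K9 x, K2 (J x), ← K3, K1]

theorem neg_J_sup_self (hJ : ∀ x : α, J (neg x) = neg (J x)) (x : α) :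
    sup (neg (J x)) x = sup one x := by
  rw [← K9 x, K3, K2 (neg (J x)), ← K3, K2 (J x), sup_J_self hJ]

theorem J_eq_one_of_sup_one_eq (hJ : ∀ x : α, J (neg x) = neg (J x)) {x : α}
    (h : sup x one = x) : J x = one := by
  have hnil : meet (neg x) (neg (neg x)) = neg x := by
    have hzero : meet (neg x) zero = neg x := by rw [K5, K4, ← K8, h]
    simpa only [K4, sup_zero, hzero] using K6 (neg x) zero
  have hJneg : neg (J x) = zero := by rw [← hJ, ← hnil, K12]
  rw [← K4 (J x), hJneg, K8]

theorem J_one_sup (hJ : ∀ x : α, J (neg x) = neg (J x)) (y : α) : J (sup one y) = one :=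
  J_eq_one_of_sup_one_eq hJ (by rw [K3, K2 y, ← K3, K1])

theorem J_J (hJ : ∀ x : α, J (neg x) = neg (J x)) (x : α) : J (J x) = J x := by
  have h : sup (neg (J x)) (J (J x)) = one := by
    rw [K10, K2 _ (J x), K9, J_one, neg_J_sup_one]
  rw [← sup_eq_left_of_neg_sup_eq_one h, K2, sup_J_self hJ]

theorem neg_J_sup_J_sup (hJ : ∀ x : α, J (neg x) = neg (J x)) (x z : α) :
    sup (neg (J x)) (J (sup x z)) = one := by
  rw [K10, ← K3, neg_J_sup_self hJ, K3, J_one_sup hJ, neg_J_sup_one]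

theorem sup_J_J_sup (hJ : ∀ x : α, J (neg x) = neg (J x)) (x z : α) :
    sup (J x) (J (sup x z)) = J (sup x z) := by
  rw [K2, sup_eq_left_of_neg_sup_eq_one (neg_J_sup_J_sup hJ x z)]

theorem sup_J_J_sup_J (hJ : ∀ x : α, J (neg x) = neg (J x)) (x z : α) :
    sup (J x) (J (sup (J x) z)) = J (sup (J x) z) := by
  simpa only [J_J hJ] using sup_J_J_sup hJ (J x) z

theorem sup_J_J (hJ : ∀ x : α, J (neg x) = neg (J x)) (x z : α) :
    sup (J x) (J z) = J (sup (J x) z) := by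
  rw [K10, sup_J_J_sup_J hJ]

theorem J_sup (hJ : ∀ x : α, J (neg x) = neg (J x)) (a b : α) :
    J (sup a b) = sup (J a) (J b) := by
  have hle : sup (sup (J a) (J b)) (J (sup a b)) = J (sup a b) := by
    rw [K3, K2 a b, sup_J_J_sup hJ b a, K2 b a, sup_J_J_sup hJ a b]
  have hJ_sup_J : sup (J a) (J b) = J (sup (J (sup a b)) b) := by
    rw [sup_J_J hJ, K2 (J a), K10 b a, K2 b (J _), K2 b a]
  have hge : sup (J (sup a b)) (sup (J a) (J b)) = sup (J a) (J b) := by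
    rw [hJ_sup_J, sup_J_J_sup_J hJ]
  rw [← hle, K2, hge]

theorem meet_neg_self_nil (x : α) :
    meet (meet x (neg x)) (neg (meet x (neg x))) = meet x (neg x) := by
  rw [neg_meet, K4, meet_comm x (neg x), meet_assoc, K6, meet_idem]

theorem meet_nil_of_nil {s : α} (hs : meet s (neg s) = s) (x : α) :
    meet (meet x s) (neg (meet x s)) = meet x s := by
  rw [neg_meet, meet_comm x s, meet_assoc, K6, meet_comm x (neg s), ← meet_assoc, hs]

theorem neg_meet_nil_meet {s : α} (hs : meet s (neg s) = s) (x : α) :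
    meet (meet (neg x) s) x = meet (neg x) s := by
  have hneg : sup (neg (meet (neg x) s)) x = neg (meet (neg x) s) := by
    rw [neg_meet, K4, K3, K2 (neg s), ← K3, K1]
  rw [← K6, hneg, meet_nil_of_nil hs]

theorem meet_nil_eq_neg_meet_nil {s : α} (hs : meet s (neg s) = s) (x : α) :
    meet x s = meet (neg x) s := by
  have h := neg_meet_nil_meet hs (neg x)
  rw [K4] at h
  rw [← h, ← neg_meet_nil_meet hs x, meet_assoc, meet_assoc, meet_comm s, meet_comm s,
    ← meet_assoc, ← meet_assoc, meet_comm x]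

theorem sup_nil_eq_meet {s t : α} (hs : meet s (neg s) = s) (ht : meet t (neg t) = t) :
    sup s t = meet s t := by
  have hst : meet s (neg t) = meet s t := by
    rw [meet_comm, ← meet_nil_eq_neg_meet_nil hs, meet_comm]
  have hsup : sup s t = sup s (meet s t) := by
    rw [← sup_neg_meet_left, ← meet_nil_eq_neg_meet_nil ht]
  rw [hsup, K2, ← sup_neg_meet_left, meet_comm (neg _), neg_meet, K6, hst, K1]

theorem meet_neg_self_sup (a b : α) :
    meet (sup a b) (neg (sup a b)) = sup (meet a (neg a)) (meet b (neg b)) := by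
  have hlhs : meet (sup a b) (neg (sup a b)) = meet (neg a) (meet b (neg b)) := by
    rw [neg_sup, meet_comm, meet_assoc, meet_comm (neg b), ← meet_assoc,
      neg_meet_sup_self_left, meet_assoc]
  calc meet (sup a b) (neg (sup a b))
      = meet (neg a) (meet (neg a) (meet b (neg b))) := by
        rw [hlhs, ← meet_assoc (neg a) (neg a), meet_idem]
    _ = meet a (meet (neg a) (meet b (neg b))) :=
      (meet_nil_eq_neg_meet_nil (meet_nil_of_nil (meet_neg_self_nil b) (neg a)) a).symm
    _ = meet (meet a (neg a)) (meet b (neg b)) := (meet_assoc _ _ _).symm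
    _ = sup (meet a (neg a)) (meet b (neg b)) :=
      (sup_nil_eq_meet (meet_neg_self_nil a) (meet_neg_self_nil b)).symm

end KAlgebra

open KAlgebra in
/-- φ(a) = (J₂a, a ∧ ¬a) preserves the operations ¬, ∨ and J₂ coordinatewise. -/
theorem stmt17 {α : Type*} [KOps α] [KAlgebra α]
    (hJ : ∀ x : α, J (neg x) = neg (J x)) (a b : α) :
    J (neg a) = neg (J a) ∧
    meet (neg a) (neg (neg a)) = meet a (neg a) ∧
    J (sup a b) = sup (J a) (J b) ∧
    meet (sup a b) (neg (sup a b)) = sup (meet a (neg a)) (meet b (neg b)) ∧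
    J (J a) = J a ∧
    meet (J a) (neg (J a)) = zero :=
  ⟨hJ a, by rw [K4, meet_comm], J_sup hJ a b, meet_neg_self_sup a b, J_J hJ a,
    by rw [K5, K4, K2, K9, neg_one]⟩
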